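/- If β ≥ ζ, then the derivative of f̄(z) = βu₀/r - (1/r)(θ₂(u₀)e^{θ₁(u₀)z} + θ₁(u₀)e^{-θ₂(u₀)z})/((θ₁(u₀)+θ₂(u₀))e^{θ₁(u₀)d}) satisfies f̄'(z) ≥ -β for all z ∈ [0,d], and the derivative of ḡ(z) = (βu₀-1)/r + (1/r)θ₁(u₀)(e^{θ₁(u₀)d}-e^{-θ₂(u₀)d})/((θ₁(u₀)+θ₂(u₀))e^{θ₁(u₀)d})·e^{-θ₂(u₀)(z-d)} satisfies ḡ'(z) ≥ -β for all z ≥ d. -/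

import Mathlib

open Real Set

noncomputable def th1 (μ σ r u : ℝ) : ℝ := (Real.sqrt ((μ - u)^2 + 2*r*σ^2) + (μ - u)) / σ^2
noncomputable def th2 (μ σ r u : ℝ) : ℝ := (Real.sqrt ((μ - u)^2 + 2*r*σ^2) - (μ - u)) / σ^2

noncomputable def fbar (μ σ r d u₀ β z : ℝ) : ℝ :=
  β * u₀ / r - (1/r) * (th2 μ σ r u₀ * Real.exp (th1 μ σ r u₀ * z) + th1 μ σ r u₀ * Real.exp (-(th2 μ σ r u₀) * z)) /
    ((th1 μ σ r u₀ + th2 μ σ r u₀) * Real.exp (th1 μ σ r u₀ * d))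

noncomputable def gbar (μ σ r d u₀ β z : ℝ) : ℝ :=
  (β * u₀ - 1) / r + (1/r) * (th1 μ σ r u₀ * (Real.exp (th1 μ σ r u₀ * d) - Real.exp (-(th2 μ σ r u₀) * d)) /
    ((th1 μ σ r u₀ + th2 μ σ r u₀) * Real.exp (th1 μ σ r u₀ * d))) * Real.exp (-(th2 μ σ r u₀) * (z - d))

noncomputable def zeta (μ σ r d u₀ : ℝ) : ℝ :=
  th1 μ σ r u₀ * th2 μ σ r u₀ * (Real.exp (th1 μ σ r u₀ * d) - Real.exp (-(th2 μ σ r u₀) * d)) /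
    (r * (th1 μ σ r u₀ + th2 μ σ r u₀) * Real.exp (th1 μ σ r u₀ * d))

/-!
Writing `κ = θ₁θ₂ / (r (θ₁ + θ₂) e^{θ₁ d}) ≥ 0`, one computes `f̄'(z) = -κ (e^{θ₁ z} - e^{-θ₂ z})`
and `ζ = κ (e^{θ₁ d} - e^{-θ₂ d})`. The bracket is increasing in `z`, so `f̄'(z) ≥ -ζ ≥ -β` for
`z ≤ d`. Likewise `ḡ'(z) = -ζ e^{-θ₂ (z - d)}`, and for `z ≥ d` the exponential factor lies in
`(0, 1]` while `ζ ≥ 0`, so again `ḡ'(z) ≥ -ζ ≥ -β`.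
-/

lemma abs_lt_sqrt_sq_add {x c : ℝ} (hc : 0 < c) : |x| < √(x ^ 2 + c) := by
  rw [← sqrt_sq_eq_abs]
  exact sqrt_lt_sqrt (sq_nonneg x) (lt_add_of_pos_right _ hc)

lemma monotone_exp_sub_exp_neg {a b : ℝ} (ha : 0 ≤ a) (hb : 0 ≤ b) :
    Monotone fun s => exp (a * s) - exp (-b * s) := by
  intro s t hst
  have h₁ : exp (a * s) ≤ exp (a * t) := exp_le_exp.mpr (mul_le_mul_of_nonneg_left hst ha)
  have h₂ : exp (-b * t) ≤ exp (-b * s) := exp_le_exp.mpr (by nlinarith)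
  dsimp only
  linarith

section

variable {μ σ r d u₀ β : ℝ}

local notation "θ₁" => th1 μ σ r u₀
local notation "θ₂" => th2 μ σ r u₀
local notation "κ" => θ₁ * θ₂ / (r * (θ₁ + θ₂) * exp (θ₁ * d))

lemma th1_pos (hσ : 0 < σ) (hr : 0 < r) : 0 < θ₁ := by
  have := (abs_lt.mp (abs_lt_sqrt_sq_add (x := μ - u₀) (by positivity : 0 < 2 * r * σ ^ 2))).1
  exact div_pos (by linarith) (by positivity)

lemma th2_pos (hσ : 0 < σ) (hr : 0 < r) : 0 < θ₂ := by
  have := (abs_lt.mp (abs_lt_sqrt_sq_add (x := μ - u₀) (by positivity : 0 < 2 * r * σ ^ 2))).2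
  exact div_pos (by linarith) (by positivity)

lemma zeta_eq : zeta μ σ r d u₀ = κ * (exp (θ₁ * d) - exp (-θ₂ * d)) := by
  unfold zeta
  ring

lemma zeta_nonneg (hσ : 0 < σ) (hr : 0 < r) (hd : 0 ≤ d) : 0 ≤ zeta μ σ r d u₀ := by
  have h₁ := th1_pos (μ := μ) (u₀ := u₀) hσ hr
  have h₂ := th2_pos (μ := μ) (u₀ := u₀) hσ hr
  have hmono := monotone_exp_sub_exp_neg h₁.le h₂.le hd
  simp only [mul_zero, exp_zero, sub_self] at hmono
  rw [zeta_eq]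
  positivity

lemma hasDerivAt_fbar (z : ℝ) :
    HasDerivAt (fbar μ σ r d u₀ β) (-(κ * (exp (θ₁ * z) - exp (-θ₂ * z)))) z := by
  have he₁ := ((hasDerivAt_id z).const_mul θ₁).exp
  have he₂ := ((hasDerivAt_id z).const_mul (-θ₂)).exp
  refine ((hasDerivAt_const z (β * u₀ / r)).sub
    ((((he₁.const_mul θ₂).add (he₂.const_mul θ₁)).const_mul (1 / r)).div_const
      ((θ₁ + θ₂) * exp (θ₁ * d)))).congr_deriv ?_
  simp only [id_eq]
  -- with the sum as an atom, `ring` can split the inverse of the product in the denominator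
  generalize θ₁ + θ₂ = s
  ring

lemma hasDerivAt_gbar (z : ℝ) :
    HasDerivAt (gbar μ σ r d u₀ β) (-(zeta μ σ r d u₀ * exp (-θ₂ * (z - d)))) z := by
  have he := (((hasDerivAt_id z).sub_const d).const_mul (-θ₂)).exp
  refine ((hasDerivAt_const z ((β * u₀ - 1) / r)).add
    (he.const_mul ((1 / r) * (θ₁ * (exp (θ₁ * d) - exp (-θ₂ * d)) /
      ((θ₁ + θ₂) * exp (θ₁ * d)))))).congr_deriv ?_
  simp only [id_eq, zeta]
  generalize θ₁ + θ₂ = s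
  ring

lemma neg_zeta_le_deriv_fbar (hσ : 0 < σ) (hr : 0 < r) {z : ℝ} (hz : z ≤ d) :
    -zeta μ σ r d u₀ ≤ deriv (fbar μ σ r d u₀ β) z := by
  have h₁ := th1_pos (μ := μ) (u₀ := u₀) hσ hr
  have h₂ := th2_pos (μ := μ) (u₀ := u₀) hσ hr
  have hκ : 0 ≤ κ := by positivity
  rw [(hasDerivAt_fbar z).deriv, zeta_eq, neg_le_neg_iff]
  exact mul_le_mul_of_nonneg_left (monotone_exp_sub_exp_neg h₁.le h₂.le hz) hκ

lemma neg_zeta_le_deriv_gbar (hσ : 0 < σ) (hr : 0 < r) (hd : 0 ≤ d) {z : ℝ} (hz : d ≤ z) :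
    -zeta μ σ r d u₀ ≤ deriv (gbar μ σ r d u₀ β) z := by
  have hexp : exp (-θ₂ * (z - d)) ≤ 1 :=
    exp_le_one_iff.mpr (mul_nonpos_of_nonpos_of_nonneg
      (neg_nonpos.mpr (th2_pos hσ hr).le) (sub_nonneg.mpr hz))
  rw [(hasDerivAt_gbar z).deriv, neg_le_neg_iff]
  exact mul_le_of_le_one_right (zeta_nonneg hσ hr hd) hexp

end

theorem stmt9_general (μ σ r d u₀ β : ℝ) (hσ : 0 < σ) (hr : 0 < r) (hd : 0 < d)
    (hβζ : β ≥ zeta μ σ r d u₀) :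
    (∀ z ∈ Set.Icc 0 d, deriv (fbar μ σ r d u₀ β) z ≥ -β) ∧
    (∀ z ≥ d, deriv (gbar μ σ r d u₀ β) z ≥ -β) :=
  ⟨fun _ hz => (neg_le_neg hβζ).trans (neg_zeta_le_deriv_fbar hσ hr hz.2),
    fun _ hz => (neg_le_neg hβζ).trans (neg_zeta_le_deriv_gbar hσ hr hd.le hz)⟩

theorem stmt9 (μ σ r d u₀ β : ℝ) (hσ : 0 < σ) (hr : 0 < r) (hd : 0 < d) (hu₀ : 0 < u₀)
    (hβ : 0 < β) (hβζ : β ≥ zeta μ σ r d u₀) :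
    (∀ z ∈ Set.Icc 0 d, deriv (fbar μ σ r d u₀ β) z ≥ -β) ∧
    (∀ z ≥ d, deriv (gbar μ σ r d u₀ β) z ≥ -β) :=
  stmt9_general μ σ r d u₀ β hσ hr hd hβζ
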